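/- If A ∈ ℂ^{n×n}, n ≥ 2, is a Nekrasov matrix, then A is nonsingular and ‖A⁻¹‖_∞ ≤ (max_i z_i(A)) / (min_i (|a_ii| − h_i(A))), where z_1(A) = 1 and z_i(A) = Σ_{j<i} (|a_ij|/|a_jj|) z_j(A) + 1. -/

import Mathlib

open Matrix

attribute [local instance] Matrix.linftyOpNormedAddCommGroup

/-- Deleted i-th row sum r_i(A). -/
noncomputable def rowSum {n : ℕ} (A : Matrix (Fin n) (Fin n) ℂ) (i : Fin n) : ℝ :=
  ∑ j ∈ Finset.univ.erase i, ‖A i j‖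

/-- Recursive Nekrasov quantities h_i(A). -/
noncomputable def nekH {n : ℕ} (A : Matrix (Fin n) (Fin n) ℂ) : Fin n → ℝ :=
  fun i =>
    (∑ j : {j : Fin n // j < i}, ‖A i j.1‖ * nekH A j.1 / ‖A j.1 j.1‖) +
      ∑ j ∈ Finset.univ.filter (fun j => i < j), ‖A i j‖
  termination_by i => (i : ℕ)
  decreasing_by exact j.2

/-- Recursive quantities z_i(A). -/
noncomputable def nekZ {n : ℕ} (A : Matrix (Fin n) (Fin n) ℂ) : Fin n → ℝ :=
  fun i => (∑ j : {j : Fin n // j < i}, ‖A i j.1‖ / ‖A j.1 j.1‖ * nekZ A j.1) + 1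
  termination_by i => (i : ℕ)
  decreasing_by exact j.2

/-- |D| : entrywise absolute value of the diagonal part. -/
noncomputable def absD {n : ℕ} (A : Matrix (Fin n) (Fin n) ℂ) : Matrix (Fin n) (Fin n) ℝ :=
  Matrix.of fun i j => if i = j then ‖A i j‖ else 0

/-- |L| : entrywise absolute value of the strictly lower triangular part. -/
noncomputable def absL {n : ℕ} (A : Matrix (Fin n) (Fin n) ℂ) : Matrix (Fin n) (Fin n) ℝ :=
  Matrix.of fun i j => if j < i then ‖A i j‖ else 0

/-- |U| : entrywise absolute value of the strictly upper triangular part. -/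
noncomputable def absU {n : ℕ} (A : Matrix (Fin n) (Fin n) ℂ) : Matrix (Fin n) (Fin n) ℝ :=
  Matrix.of fun i j => if i < j then ‖A i j‖ else 0

/-- Comparison matrix ⟨A⟩. -/
noncomputable def cmpM {n : ℕ} (A : Matrix (Fin n) (Fin n) ℂ) : Matrix (Fin n) (Fin n) ℝ :=
  Matrix.of fun i j => if i = j then ‖A i j‖ else -‖A i j‖

lemma nekH_nonneg {n : ℕ} (A : Matrix (Fin n) (Fin n) ℂ) : ∀ i, 0 ≤ nekH A i := by
  have H : ∀ N : ℕ, ∀ i : Fin n, (i : ℕ) < N → 0 ≤ nekH A i := by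
    intro N
    induction N with
    | zero => intro i h; omega
    | succ N ih =>
      intro i h
      rw [nekH]
      refine add_nonneg (Finset.sum_nonneg fun j _ => ?_)
        (Finset.sum_nonneg fun j _ => norm_nonneg _)
      exact div_nonneg (mul_nonneg (norm_nonneg _) (ih j.1 (by have := j.2; omega)))
        (norm_nonneg _)
  exact fun i => H (i + 1) i (Nat.lt_succ_self _)

lemma nekZ_one_le {n : ℕ} (A : Matrix (Fin n) (Fin n) ℂ) : ∀ i, 1 ≤ nekZ A i := by
  have H : ∀ N : ℕ, ∀ i : Fin n, (i : ℕ) < N → 1 ≤ nekZ A i := by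
    intro N
    induction N with
    | zero => intro i h; omega
    | succ N ih =>
      intro i h
      rw [nekZ]
      have : (0:ℝ) ≤ ∑ j : {j : Fin n // j < i}, ‖A i j.1‖ / ‖A j.1 j.1‖ * nekZ A j.1 :=
        Finset.sum_nonneg fun j _ => mul_nonneg (div_nonneg (norm_nonneg _) (norm_nonneg _))
          (le_trans zero_le_one (ih j.1 (by have := j.2; omega)))
      linarith
  exact fun i => H (i + 1) i (Nat.lt_succ_self _)

lemma nekH_eq {n : ℕ} (A : Matrix (Fin n) (Fin n) ℂ) (i : Fin n) :
    nekH A i = (∑ j ∈ Finset.univ.filter (fun j => j < i), ‖A i j‖ * nekH A j / ‖A j j‖) +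
      ∑ j ∈ Finset.univ.filter (fun j => i < j), ‖A i j‖ := by
  rw [nekH]
  congr 1
  exact (Finset.sum_subtype (p := fun j : Fin n => j < i)
    (Finset.univ.filter (fun j => j < i)) (fun x => by simp)
    (fun j => ‖A i j‖ * nekH A j / ‖A j j‖)).symm

lemma nekZ_eq {n : ℕ} (A : Matrix (Fin n) (Fin n) ℂ) (i : Fin n) :
    nekZ A i = (∑ j ∈ Finset.univ.filter (fun j => j < i), ‖A i j‖ / ‖A j j‖ * nekZ A j) + 1 := by
  rw [nekZ]
  congr 1
  exact (Finset.sum_subtype (p := fun j : Fin n => j < i)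
    (Finset.univ.filter (fun j => j < i)) (fun x => by simp)
    (fun j => ‖A i j‖ / ‖A j j‖ * nekZ A j)).symm

lemma erase_split {n : ℕ} (i : Fin n) (g : Fin n → ℝ) :
    ∑ j ∈ Finset.univ.erase i, g j =
      (∑ j ∈ Finset.univ.filter (fun j => j < i), g j) +
      ∑ j ∈ Finset.univ.filter (fun j => i < j), g j := by
  rw [← Finset.sum_filter_add_sum_filter_not (Finset.univ.erase i) (fun j => j < i)]
  congr 1
  · apply Finset.sum_congr _ fun _ _ => rfl
    ext j
    simp only [Finset.mem_filter, Finset.mem_erase, Finset.mem_univ, true_and, and_true]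
    exact ⟨fun h => h.2, fun h => ⟨ne_of_lt h, h⟩⟩
  · apply Finset.sum_congr _ fun _ _ => rfl
    ext j
    simp only [Finset.mem_filter, Finset.mem_erase, Finset.mem_univ, true_and, and_true]
    constructor
    · rintro ⟨h1, h2⟩
      exact lt_of_le_of_ne (not_lt.mp h2) (fun e => h1 e.symm)
    · intro h
      exact ⟨(ne_of_lt h).symm, not_lt.mpr (le_of_lt h)⟩

lemma linfty_norm_le_of_rows {n : ℕ} (M : Matrix (Fin n) (Fin n) ℂ) {c : ℝ} (hc : 0 ≤ c)
    (h : ∀ i, ∑ j, ‖M i j‖ ≤ c) : ‖M‖ ≤ c := by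
  rw [Matrix.linfty_opNorm_def, ← Real.coe_toNNReal c hc, NNReal.coe_le_coe]
  refine Finset.sup_le fun i _ => ?_
  rw [← NNReal.coe_le_coe]
  push_cast
  rw [Real.coe_toNNReal c hc]
  exact h i


/-- Second bound: a Nekrasov matrix A is nonsingular and
    ‖A⁻¹‖_∞ ≤ (max_i z_i(A)) / (min_i (|a_ii| − h_i(A))). -/
theorem stmt11 {n : ℕ} (hn : 2 ≤ n) (A : Matrix (Fin n) (Fin n) ℂ)
    (hNek : ∀ i, nekH A i < ‖A i i‖) :
    IsUnit A ∧
    ‖A⁻¹‖ ≤ (⨆ i, nekZ A i) / (⨅ i, (‖A i i‖ - nekH A i)) := by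
  have hne : Nonempty (Fin n) := ⟨⟨0, by omega⟩⟩
  have hpos : ∀ i, (0:ℝ) < ‖A i i‖ := fun i => lt_of_le_of_lt (nekH_nonneg A i) (hNek i)
  have hz1 := nekZ_one_le A
  have hzpos : ∀ i, (0:ℝ) < nekZ A i := fun i => lt_of_lt_of_le zero_lt_one (hz1 i)
  obtain ⟨i0, hi0⟩ := Finite.exists_min (fun i => (‖A i i‖ - nekH A i) / nekZ A i)
  set ε := (‖A i0 i0‖ - nekH A i0) / nekZ A i0 with hεdef
  have hεpos : 0 < ε := div_pos (sub_pos.mpr (hNek i0)) (hzpos i0)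
  have hεle : ∀ i, ε * nekZ A i ≤ ‖A i i‖ - nekH A i := by
    intro i
    calc ε * nekZ A i ≤ (‖A i i‖ - nekH A i) / nekZ A i * nekZ A i :=
          mul_le_mul_of_nonneg_right (hi0 i) (hzpos i).le
      _ = ‖A i i‖ - nekH A i := div_mul_cancel₀ _ (hzpos i).ne'
  set w : Fin n → ℝ := fun i => (nekH A i + ε * nekZ A i) / ‖A i i‖ with hw
  have hwpos : ∀ i, 0 < w i := fun i =>
    div_pos (add_pos_of_nonneg_of_pos (nekH_nonneg A i) (mul_pos hεpos (hzpos i))) (hpos i)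
  have hwle : ∀ i, w i ≤ 1 := fun i => (div_le_one (hpos i)).mpr (by have := hεle i; linarith)
  set D : Matrix (Fin n) (Fin n) ℂ := Matrix.diagonal (fun j => (w j : ℂ)) with hD
  set B : Matrix (Fin n) (Fin n) ℂ := A * D with hB
  have hBent : ∀ i j, B i j = A i j * (w j : ℂ) := fun i j => by
    rw [hB, hD, Matrix.mul_diagonal]
  have hBnorm : ∀ i j, ‖B i j‖ = ‖A i j‖ * w j := fun i j => by
    rw [hBent, norm_mul, Complex.norm_real, Real.norm_of_nonneg (hwpos j).le]
  have hBdiag : ∀ i, ‖B i i‖ = nekH A i + ε * nekZ A i := fun i => by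
    rw [hBnorm, hw]
    exact mul_div_cancel₀ _ (hpos i).ne'
  have hSDD : ∀ i, (∑ j ∈ Finset.univ.erase i, ‖B i j‖) + ε ≤ ‖B i i‖ := by
    intro i
    have e1 : ∑ j ∈ Finset.univ.erase i, ‖B i j‖ =
        (∑ j ∈ Finset.univ.filter (fun j => j < i), ‖A i j‖ * w j)
        + ∑ j ∈ Finset.univ.filter (fun j => i < j), ‖A i j‖ * w j := by
      simp_rw [hBnorm]; exact erase_split i _
    have e2 : ∑ j ∈ Finset.univ.filter (fun j => j < i), ‖A i j‖ * w j
        = (∑ j ∈ Finset.univ.filter (fun j => j < i), ‖A i j‖ * nekH A j / ‖A j j‖)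
          + ε * (nekZ A i - 1) := by
      have step : ∀ j ∈ Finset.univ.filter (fun j => j < i),
          ‖A i j‖ * w j = ‖A i j‖ * nekH A j / ‖A j j‖
            + ε * (‖A i j‖ / ‖A j j‖ * nekZ A j) := by
        intro j _
        rw [hw]
        field_simp
      rw [Finset.sum_congr rfl step, Finset.sum_add_distrib, ← Finset.mul_sum]
      congr 1
      rw [nekZ_eq A i]
      ring
    have e3 : ∑ j ∈ Finset.univ.filter (fun j => i < j), ‖A i j‖ * w j
        ≤ ∑ j ∈ Finset.univ.filter (fun j => i < j), ‖A i j‖ :=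
      Finset.sum_le_sum fun j _ => mul_le_of_le_one_right (norm_nonneg _) (hwle j)
    have e4 := nekH_eq A i
    rw [e1, e2, hBdiag]
    linarith
  have hkey : ∀ x : Fin n → ℂ, ε * ‖x‖ ≤ ‖B *ᵥ x‖ := by
    intro x
    obtain ⟨i, -, hi⟩ := Finset.exists_mem_eq_sup Finset.univ Finset.univ_nonempty
      (fun i => ‖x i‖₊)
    have hxnorm : ‖x‖ = ‖x i‖ := by
      rw [Pi.norm_def, hi]; rfl
    have h1 : ‖(B *ᵥ x) i‖ ≤ ‖B *ᵥ x‖ := norm_le_pi_norm _ i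
    have h2 : (B *ᵥ x) i = B i i * x i + ∑ j ∈ Finset.univ.erase i, B i j * x j := by
      rw [Matrix.mulVec, dotProduct]
      exact (Finset.add_sum_erase _ _ (Finset.mem_univ i)).symm
    have h3 : ‖∑ j ∈ Finset.univ.erase i, B i j * x j‖
        ≤ (∑ j ∈ Finset.univ.erase i, ‖B i j‖) * ‖x i‖ := by
      calc ‖∑ j ∈ Finset.univ.erase i, B i j * x j‖
          ≤ ∑ j ∈ Finset.univ.erase i, ‖B i j * x j‖ := norm_sum_le _ _
        _ ≤ ∑ j ∈ Finset.univ.erase i, ‖B i j‖ * ‖x i‖ := by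
            refine Finset.sum_le_sum fun j _ => ?_
            rw [norm_mul]
            refine mul_le_mul_of_nonneg_left ?_ (norm_nonneg _)
            rw [← hxnorm]; exact norm_le_pi_norm x j
        _ = (∑ j ∈ Finset.univ.erase i, ‖B i j‖) * ‖x i‖ := (Finset.sum_mul _ _ _).symm
    have h4 : ‖B i i * x i‖ - ‖∑ j ∈ Finset.univ.erase i, B i j * x j‖ ≤ ‖(B *ᵥ x) i‖ := by
      rw [h2]
      have := norm_add_le (B i i * x i + ∑ j ∈ Finset.univ.erase i, B i j * x j)
        (-(∑ j ∈ Finset.univ.erase i, B i j * x j))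
      simp only [add_neg_cancel_right, norm_neg] at this
      linarith
    calc ε * ‖x‖ = ε * ‖x i‖ := by rw [hxnorm]
      _ ≤ (‖B i i‖ - ∑ j ∈ Finset.univ.erase i, ‖B i j‖) * ‖x i‖ :=
          mul_le_mul_of_nonneg_right (by linarith [hSDD i]) (norm_nonneg _)
      _ = ‖B i i‖ * ‖x i‖ - (∑ j ∈ Finset.univ.erase i, ‖B i j‖) * ‖x i‖ := sub_mul _ _ _
      _ ≤ ‖B i i * x i‖ - ‖∑ j ∈ Finset.univ.erase i, B i j * x j‖ := by
          rw [norm_mul]; linarith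
      _ ≤ ‖(B *ᵥ x) i‖ := h4
      _ ≤ ‖B *ᵥ x‖ := h1
  have hBunit : IsUnit B := by
    rw [← Matrix.mulVec_injective_iff_isUnit]
    intro x y hxy
    have hz : B *ᵥ (x - y) = 0 := by rw [Matrix.mulVec_sub, hxy, sub_self]
    have hk := hkey (x - y)
    rw [hz, norm_zero] at hk
    have hle : ‖x - y‖ ≤ 0 := by nlinarith [norm_nonneg (x - y)]
    exact sub_eq_zero.mp (norm_le_zero_iff.mp hle)
  have hBdet : IsUnit B.det := (Matrix.isUnit_iff_isUnit_det B).mp hBunit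
  have hDdet : IsUnit D.det := by
    rw [hD, Matrix.det_diagonal]
    refine isUnit_iff_ne_zero.mpr (Finset.prod_ne_zero_iff.mpr fun j _ => ?_)
    exact_mod_cast (hwpos j).ne'
  have hAunit : IsUnit A := by
    rw [Matrix.isUnit_iff_isUnit_det]
    have hmul : IsUnit (A.det * D.det) := by
      rw [← Matrix.det_mul]; rw [hB] at hBdet; exact hBdet
    exact isUnit_of_mul_isUnit_left hmul
  refine ⟨hAunit, ?_⟩
  have hAinv : A⁻¹ = D * B⁻¹ := by
    apply Matrix.inv_eq_right_inv
    rw [← Matrix.mul_assoc, ← hB, Matrix.mul_nonsing_inv _ hBdet]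
  have hBrow : ∀ i, ∑ j, ‖B⁻¹ i j‖ ≤ 1 / ε := by
    intro i
    set v : Fin n → ℂ := fun j =>
      if h : B⁻¹ i j = 0 then 1 else (‖B⁻¹ i j‖ : ℂ) / (B⁻¹ i j) with hv
    have hv1 : ∀ j, ‖v j‖ = 1 := by
      intro j
      rw [hv]
      by_cases h : B⁻¹ i j = 0
      · simp [h]
      · simp only [h, dif_neg, not_false_iff]
        rw [norm_div, Complex.norm_real, Real.norm_of_nonneg (norm_nonneg _),
          div_self (norm_ne_zero_iff.mpr h)]
    have hvn : ‖v‖ ≤ 1 := (pi_norm_le_iff_of_nonneg zero_le_one).mpr fun j => le_of_eq (hv1 j)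
    have hmul : ∀ j, B⁻¹ i j * v j = (‖B⁻¹ i j‖ : ℂ) := by
      intro j
      rw [hv]
      by_cases h : B⁻¹ i j = 0
      · simp [h]
      · simp only [h, dif_neg, not_false_iff]
        rw [mul_comm, div_mul_cancel₀ _ h]
    have hsum : (B⁻¹ *ᵥ v) i = ((∑ j, ‖B⁻¹ i j‖ : ℝ) : ℂ) := by
      rw [Matrix.mulVec, dotProduct]
      push_cast
      exact Finset.sum_congr rfl fun j _ => hmul j
    have h5 : ∑ j, ‖B⁻¹ i j‖ ≤ ‖B⁻¹ *ᵥ v‖ := by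
      have : ∑ j, ‖B⁻¹ i j‖ = ‖(B⁻¹ *ᵥ v) i‖ := by
        rw [hsum, Complex.norm_real,
          Real.norm_of_nonneg (Finset.sum_nonneg fun j _ => norm_nonneg _)]
      rw [this]
      exact norm_le_pi_norm _ i
    have h6 : ε * ‖B⁻¹ *ᵥ v‖ ≤ ‖v‖ := by
      have hk := hkey (B⁻¹ *ᵥ v)
      rwa [Matrix.mulVec_mulVec, Matrix.mul_nonsing_inv _ hBdet, Matrix.one_mulVec] at hk
    have h7 : ‖B⁻¹ *ᵥ v‖ ≤ 1 / ε := by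
      rw [le_div_iff₀ hεpos]
      nlinarith
    linarith
  have hArow : ∀ i, ∑ j, ‖A⁻¹ i j‖ ≤ 1 / ε := by
    intro i
    have hentry : ∀ j, ‖A⁻¹ i j‖ = w i * ‖B⁻¹ i j‖ := by
      intro j
      rw [hAinv, hD, Matrix.diagonal_mul, norm_mul, Complex.norm_real,
        Real.norm_of_nonneg (hwpos i).le]
    rw [Finset.sum_congr rfl fun j _ => hentry j, ← Finset.mul_sum]
    calc w i * ∑ j, ‖B⁻¹ i j‖ ≤ 1 * (1 / ε) :=
        mul_le_mul (hwle i) (hBrow i)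
          (Finset.sum_nonneg fun j _ => norm_nonneg _) zero_le_one
      _ = 1 / ε := one_mul _
  have hnorm : ‖A⁻¹‖ ≤ 1 / ε := linfty_norm_le_of_rows _ (by positivity) hArow
  have hbddA : BddAbove (Set.range (nekZ A)) := Set.Finite.bddAbove (Set.finite_range _)
  have hbddB : BddBelow (Set.range fun i => ‖A i i‖ - nekH A i) :=
    Set.Finite.bddBelow (Set.finite_range _)
  have hS : nekZ A i0 ≤ ⨆ i, nekZ A i := le_ciSup hbddA i0
  have hSpos : 0 < ⨆ i, nekZ A i := lt_of_lt_of_le (hzpos i0) hS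
  have hm_le : (⨅ i, (‖A i i‖ - nekH A i)) ≤ ‖A i0 i0‖ - nekH A i0 := ciInf_le hbddB i0
  obtain ⟨i1, hi1⟩ := Finite.exists_min (fun i => ‖A i i‖ - nekH A i)
  have hmpos : 0 < ⨅ i, (‖A i i‖ - nekH A i) := by
    have h1 : ‖A i1 i1‖ - nekH A i1 ≤ ⨅ i, (‖A i i‖ - nekH A i) := le_ciInf hi1
    have h2 : 0 < ‖A i1 i1‖ - nekH A i1 := sub_pos.mpr (hNek i1)
    linarith
  refine le_trans hnorm ?_
  rw [div_le_div_iff₀ hεpos hmpos]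
  have hkey2 : (⨅ i, (‖A i i‖ - nekH A i)) ≤ (⨆ i, nekZ A i) * ε := by
    calc (⨅ i, (‖A i i‖ - nekH A i)) ≤ ‖A i0 i0‖ - nekH A i0 := hm_le
      _ = nekZ A i0 * ε := by
          rw [hεdef, mul_div_assoc']
          exact (mul_div_cancel_left₀ _ (hzpos i0).ne').symm
      _ ≤ (⨆ i, nekZ A i) * ε := mul_le_mul_of_nonneg_right hS hεpos.le
  linarith
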